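/- The Gromov–Wasserstein distance d_GW^MCMS between Markov chain metric spaces is a proper distance modulo isomorphism: it is nonnegative and symmetric, it satisfies the triangle inequality d_GW^MCMS((𝒳,d_X),(𝒲,d_W)) ≤ d_GW^MCMS((𝒳,d_X),(𝒴,d_Y)) + d_GW^MCMS((𝒴,d_Y),(𝒲,d_W)), and d_GW^MCMS((𝒳,d_X),(𝒴,d_Y)) = 0 if and only if (𝒳,d_X) and (𝒴,d_Y) are isomorphic MCMSs. -/

import Mathlib

open scoped BigOperators NNReal

namespace WLGW

variable {X Y W : Type*}

/-- A probability mass function on a finite type. -/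
def IsPMF [Fintype X] (p : X → ℝ) : Prop :=
  (∀ x, 0 ≤ p x) ∧ ∑ x, p x = 1

/-- `γ` is a coupling of `p` and `q`. -/
def IsCoupling [Fintype X] [Fintype Y] (p : X → ℝ) (q : Y → ℝ) (γ : X → Y → ℝ) : Prop :=
  (∀ x y, 0 ≤ γ x y) ∧ (∀ x, ∑ y, γ x y = p x) ∧ (∀ y, ∑ x, γ x y = q y)

/-- `(m, μ)` is a measure Markov chain: each `m x` is a pmf, and `μ` is a fully supported
stationary pmf. -/
def IsMMC [Fintype X] (m : X → X → ℝ) (μ : X → ℝ) : Prop :=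
  (∀ x, IsPMF (m x)) ∧ IsPMF μ ∧ (∀ x, 0 < μ x) ∧ (∀ x', ∑ x, m x x' * μ x = μ x')

/-- `dX` is a metric on the finite type `X`. -/
def IsMetricOn [Fintype X] (dX : X → X → ℝ) : Prop :=
  (∀ x, dX x x = 0) ∧ (∀ x y, dX x y = dX y x) ∧ (∀ x y, x ≠ y → 0 < dX x y) ∧
    (∀ x y z, dX x z ≤ dX x y + dX y z)

/-- The iterated Weisfeiler–Lehman cost `D_k`. -/
noncomputable def costIter [Fintype X] [Fintype Y] (mX : X → X → ℝ) (mY : Y → Y → ℝ)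
    (D0 : X → Y → ℝ) : ℕ → X → Y → ℝ
  | 0 => D0
  | k + 1 => fun x y => sInf {r : ℝ | ∃ γ : X → Y → ℝ, IsCoupling (mX x) (mY y) γ ∧
      r = ∑ x', ∑ y', costIter mX mY D0 k x' y' * γ x' y'}

/-- The Weisfeiler–Lehman distance of depth `k` between two labeled measure Markov chains. -/
noncomputable def dWL {Z : Type*} [PseudoMetricSpace Z] [Fintype X] [Fintype Y]
    (mX : X → X → ℝ) (μX : X → ℝ) (ℓX : X → Z)
    (mY : Y → Y → ℝ) (μY : Y → ℝ) (ℓY : Y → Z) (k : ℕ) : ℝ :=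
  sInf {r : ℝ | ∃ γ : X → Y → ℝ, IsCoupling μX μY γ ∧
      r = ∑ x, ∑ y, costIter mX mY (fun x y => dist (ℓX x) (ℓY y)) k x y * γ x y}

/-- The absolute Weisfeiler–Lehman distance. -/
noncomputable def dWLsup {Z : Type*} [PseudoMetricSpace Z] [Fintype X] [Fintype Y]
    (mX : X → X → ℝ) (μX : X → ℝ) (ℓX : X → Z)
    (mY : Y → Y → ℝ) (μY : Y → ℝ) (ℓY : Y → Z) : ℝ :=
  ⨆ k : ℕ, dWL mX μX ℓX mY μY ℓY k

/-- Isomorphism of labeled measure Markov chains. -/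
def LMMCIso {Z : Type*} [Fintype X] [Fintype Y]
    (mX : X → X → ℝ) (μX : X → ℝ) (ℓX : X → Z)
    (mY : Y → Y → ℝ) (μY : Y → ℝ) (ℓY : Y → Z) : Prop :=
  ∃ ψ : X ≃ Y, (∀ x, ℓY (ψ x) = ℓX x) ∧ (∀ x x', mY (ψ x) (ψ x') = mX x x') ∧
    (∀ x, μY (ψ x) = μX x)

/-- The `q`-Markov kernel of a finite simple graph. -/
noncomputable def graphKernel {V : Type*} [Fintype V] [DecidableEq V] (G : SimpleGraph V) [DecidableRel G.Adj]
    (q : ℝ) (v v' : V) : ℝ :=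
  if G.degree v = 0 then (if v' = v then 1 else 0)
  else (if v' = v then q else 0) + (if G.Adj v v' then (1 - q) / (G.degree v : ℝ) else 0)

/-- The stationary degree measure of a finite simple graph. -/
noncomputable def graphMu {V : Type*} [Fintype V] (G : SimpleGraph V) [DecidableRel G.Adj]
    (v : V) : ℝ :=
  ((max (G.degree v) 1 : ℕ) : ℝ) / ∑ v', ((max (G.degree v') 1 : ℕ) : ℝ)

/-- The type of depth-`k` Weisfeiler–Lehman labels over an initial label set `Z`. -/
def WLType (Z : Type*) : ℕ → Type _
  | 0 => Z
  | k + 1 => WLType Z k × Multiset (WLType Z k)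

/-- The Weisfeiler–Lehman label hierarchy `ℓ^k` of a labeled graph. -/
def wlLabel {V Z : Type*} [Fintype V] (G : SimpleGraph V) [DecidableRel G.Adj] (ℓ : V → Z) :
    (k : ℕ) → V → WLType Z k
  | 0 => ℓ
  | k + 1 => fun v => (wlLabel G ℓ k v, (G.neighborFinset v).val.map (wlLabel G ℓ k))

/-- The multiset `L_k((G, ℓ))` of depth-`k` WL labels of all vertices. -/
def wlMultiset {V Z : Type*} [Fintype V] (G : SimpleGraph V) [DecidableRel G.Adj]
    (ℓ : V → Z) (k : ℕ) : Multiset (WLType Z k) :=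
  Finset.univ.val.map (wlLabel G ℓ k)

/-- The WL test distinguishes two labeled graphs. -/
def WLDistinguishes {V₁ V₂ Z : Type*} [Fintype V₁] [Fintype V₂]
    (G₁ : SimpleGraph V₁) [DecidableRel G₁.Adj] (ℓ₁ : V₁ → Z)
    (G₂ : SimpleGraph V₂) [DecidableRel G₂.Adj] (ℓ₂ : V₂ → Z) : Prop :=
  ∃ k, wlMultiset G₁ ℓ₁ k ≠ wlMultiset G₂ ℓ₂ k

/-- The relabeling `ℓ^g(v) = g(ℓ(v), deg v, |V|)`. -/
def relabel {V Z Z₁ : Type*} [Fintype V] (G : SimpleGraph V) [DecidableRel G.Adj]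
    (ℓ : V → Z) (g : Z × ℕ × ℕ → Z₁) : V → Z₁ :=
  fun v => g (ℓ v, G.degree v, Fintype.card V)

/-- `kpow m k = m^{⊗k}`, the `k`-step Markov kernel (`kpow m 0` is the identity kernel). -/
def kpow [Fintype X] [DecidableEq X] (m : X → X → ℝ) : ℕ → X → X → ℝ
  | 0 => fun x x' => if x' = x then 1 else 0
  | k + 1 => fun x x'' => ∑ x', kpow m k x' x'' * m x x'

/-- The Wasserstein distance between the pushforwards `(ℓX)_# p` and `(ℓY)_# q`, expressed
through couplings of `p` and `q`. -/
noncomputable def wassersteinCost {Z : Type*} [PseudoMetricSpace Z] [Fintype X] [Fintype Y]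
    (ℓX : X → Z) (ℓY : Y → Z) (p : X → ℝ) (q : Y → ℝ) : ℝ :=
  sInf {r : ℝ | ∃ γ : X → Y → ℝ, IsCoupling p q γ ∧
      r = ∑ x, ∑ y, dist (ℓX x) (ℓY y) * γ x y}

/-- The lower bound `d_WLLB^(k)` for the WL distance. -/
noncomputable def dWLLB {Z : Type*} [PseudoMetricSpace Z] [Fintype X] [Fintype Y]
    [DecidableEq X] [DecidableEq Y]
    (mX : X → X → ℝ) (μX : X → ℝ) (ℓX : X → Z)
    (mY : Y → Y → ℝ) (μY : Y → ℝ) (ℓY : Y → Z) (k : ℕ) : ℝ :=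
  sInf {r : ℝ | ∃ γ : X → Y → ℝ, IsCoupling μX μY γ ∧
      r = ∑ x, ∑ y, wassersteinCost ℓX ℓY (kpow mX k x) (kpow mY k y) * γ x y}

/-- Dimension sequence of an MCNN: `mcnnDim d dims 0 = d`, then `dims`. -/
def mcnnDim (d : ℕ) (dims : ℕ → ℕ) : ℕ → ℕ
  | 0 => d
  | i + 1 => dims i

/-- A `k`-layer Markov chain neural network on `ℝ^d`-LMMCs: Lipschitz maps `φ_1, …, φ_{k+1}`
followed by a continuous map `ψ`. -/
structure MCNN (d k : ℕ) where
  dims : ℕ → ℕ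
  φ : (i : ℕ) → EuclideanSpace ℝ (Fin (mcnnDim d dims i)) →
      EuclideanSpace ℝ (Fin (mcnnDim d dims (i + 1)))
  φ_lip : ∀ i, ∃ K : ℝ≥0, LipschitzWith K (φ i)
  ψ : EuclideanSpace ℝ (Fin (mcnnDim d dims (k + 1))) → ℝ
  ψ_cont : Continuous ψ

/-- Labels after `j` layers of an MCNN (the map `F_{φ_j} ∘ ⋯ ∘ F_{φ_1}`). -/
noncomputable def mcnnLabel {X : Type*} [Fintype X] {d k : ℕ} (N : MCNN d k)
    (m : X → X → ℝ) (ℓ : X → EuclideanSpace ℝ (Fin d)) :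
    (j : ℕ) → X → EuclideanSpace ℝ (Fin (mcnnDim d N.dims j))
  | 0 => ℓ
  | j + 1 => fun x => ∑ x', m x x' • N.φ j (mcnnLabel N m ℓ j x')

/-- Evaluation of an MCNN on an `ℝ^d`-LMMC: `ψ ∘ S_{φ_{k+1}} ∘ F_{φ_k} ∘ ⋯ ∘ F_{φ_1}`. -/
noncomputable def mcnnEval {X : Type*} [Fintype X] {d k : ℕ} (N : MCNN d k)
    (m : X → X → ℝ) (μ : X → ℝ) (ℓ : X → EuclideanSpace ℝ (Fin d)) : ℝ :=
  N.ψ (∑ x, μ x • N.φ k (mcnnLabel N m ℓ k x))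

/-- `k`-step couplings between the Markov kernels `mX` and `mY` (defined for `k ≥ 1`). -/
def IsStepCoupling [Fintype X] [Fintype Y] (mX : X → X → ℝ) (mY : Y → Y → ℝ) :
    ℕ → (X → Y → X → Y → ℝ) → Prop
  | 0, _ => False
  | 1, ν => ∀ x y, IsCoupling (mX x) (mY y) (ν x y)
  | k + 2, ν => ∃ νk ν1 : X → Y → X → Y → ℝ,
      IsStepCoupling mX mY (k + 1) νk ∧ (∀ x y, IsCoupling (mX x) (mY y) (ν1 x y)) ∧
      ν = fun x y x' y' => ∑ x'', ∑ y'', νk x'' y'' x' y' * ν1 x y x'' y''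

/-- The `k`-distortion `dis^(k)(γ, ν)`. -/
def disk [Fintype X] [Fintype Y] (dX : X → X → ℝ) (dY : Y → Y → ℝ)
    (γ : X → Y → ℝ) (ν : X → Y → X → Y → ℝ) : ℝ :=
  ∑ x, ∑ y, ∑ x'', ∑ y'', ∑ x', ∑ y',
    |dX x x' - dY y y'| * ν x'' y'' x' y' * γ x'' y'' * γ x y

/-- The `k`-Gromov–Wasserstein distance between Markov chain metric spaces. -/
noncomputable def dGWk [Fintype X] [Fintype Y]
    (mX : X → X → ℝ) (dX : X → X → ℝ) (μX : X → ℝ)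
    (mY : Y → Y → ℝ) (dY : Y → Y → ℝ) (μY : Y → ℝ) (k : ℕ) : ℝ :=
  sInf {r : ℝ | ∃ (γ : X → Y → ℝ) (ν : X → Y → X → Y → ℝ),
      IsCoupling μX μY γ ∧ IsStepCoupling mX mY k ν ∧ r = disk dX dY γ ν}

/-- The absolute Gromov–Wasserstein distance between MCMSs: `sup_{k ≥ 1} d_GW^(k)`. -/
noncomputable def dGWMCMS [Fintype X] [Fintype Y]
    (mX : X → X → ℝ) (dX : X → X → ℝ) (μX : X → ℝ)
    (mY : Y → Y → ℝ) (dY : Y → Y → ℝ) (μY : Y → ℝ) : ℝ :=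
  ⨆ k : ℕ, dGWk mX dX μX mY dY μY (k + 1)

/-- Isomorphism of Markov chain metric spaces. -/
def MCMSIso [Fintype X] [Fintype Y]
    (mX : X → X → ℝ) (dX : X → X → ℝ) (μX : X → ℝ)
    (mY : Y → Y → ℝ) (dY : Y → Y → ℝ) (μY : Y → ℝ) : Prop :=
  ∃ ψ : X ≃ Y, (∀ x x', dY (ψ x) (ψ x') = dX x x') ∧
    (∀ x x', mY (ψ x) (ψ x') = mX x x') ∧ (∀ x, μY (ψ x) = μX x)

/-- The decoupled Gromov–Wasserstein distance between finite metric measure spaces. -/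
noncomputable def dGWbi [Fintype X] [Fintype Y]
    (dX : X → X → ℝ) (μX : X → ℝ) (dY : Y → Y → ℝ) (μY : Y → ℝ) : ℝ :=
  sInf {r : ℝ | ∃ γ γ' : X → Y → ℝ, IsCoupling μX μY γ ∧ IsCoupling μX μY γ' ∧
      r = ∑ x, ∑ y, ∑ x', ∑ y', |dX x x' - dY y y'| * γ' x' y' * γ x y}

/-- `k`-step couplings between the measures `μX` and `μY`
(`k = 0` gives ordinary couplings). -/
def IsMeasureStepCoupling [Fintype X] [Fintype Y] (mX : X → X → ℝ) (mY : Y → Y → ℝ)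
    (μX : X → ℝ) (μY : Y → ℝ) : ℕ → (X → Y → ℝ) → Prop
  | 0, γ => IsCoupling μX μY γ
  | k + 1, γk => ∃ (γ : X → Y → ℝ) (ν : X → Y → X → Y → ℝ),
      IsCoupling μX μY γ ∧ IsStepCoupling mX mY (k + 1) ν ∧
      γk = fun x' y' => ∑ x, ∑ y, ν x y x' y' * γ x y

/-- The WWL label iteration. -/
noncomputable def wwlLabel {V : Type*} [Fintype V] {d : ℕ} (G : SimpleGraph V)
    [DecidableRel G.Adj] (ℓ : V → EuclideanSpace ℝ (Fin d)) :
    ℕ → V → EuclideanSpace ℝ (Fin d)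
  | 0 => ℓ
  | i + 1 => fun v => (1 / 2 : ℝ) •
      (wwlLabel G ℓ i v + ((G.degree v : ℝ))⁻¹ • ∑ v' ∈ G.neighborFinset v, wwlLabel G ℓ i v')

/-- The stacked WWL label `L^k_G = (ℓ^0, …, ℓ^k)`, valued in Euclidean `ℝ^{d(k+1)}`. -/
noncomputable def stackedLabel {V : Type*} [Fintype V] {d : ℕ} (G : SimpleGraph V)
    [DecidableRel G.Adj] (ℓ : V → EuclideanSpace ℝ (Fin d)) (k : ℕ) (v : V) :
    EuclideanSpace ℝ (Fin (k + 1) × Fin d) :=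
  WithLp.toLp 2 (fun p : Fin (k + 1) × Fin d => wwlLabel G ℓ (p.1 : ℕ) v p.2)

/-!
Nonnegativity is clear and symmetry follows by transposing all couplings. For the triangle
inequality, glue a coupling `γ₁` of `μX, μY` and a coupling `γ₂` of `μY, μW` into the law
`Γ = γ₁ γ₂ / μY` on `X × Y × W`, and glue the one-step couplings of `mX x, mY y` and of
`mY y, mW w` along `mY y` in the same way; averaging the glued step over `y` with weights `Γ`
gives a one-step coupling of `mX x, mW w`. Iterating yields a `k`-step coupling `ν` of `mX, mW`
and a law `H` on `X × Y × W` whose three pair marginals are the pushes of those of `Γ`, so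
integrating `|dX - dW| ≤ |dX - dY| + |dY - dW|` against `Γ ⊗ H` gives the inequality for every
`k`.

An isomorphism `ψ` yields the coupling of `μX` supported on the graph of `ψ`; by stationarity it
is invariant under the graph couplings of the kernels, so every distortion vanishes. Conversely,
a zero distance forces `d_GW^(1) = 0`, which is attained by compactness. At a minimiser
`(γ, ν)` the supports of `γ` and of its push by `ν` lie in the graph of one isometry `ψ`, which
then carries `μX` to `μY` and `mX x` to `mY (ψ x)`.
-/

theorem sum_comm₄ {α β γ δ M : Type*} [Fintype α] [Fintype β] [Fintype γ] [Fintype δ]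
    [AddCommMonoid M] (f : α → β → γ → δ → M) :
    ∑ a, ∑ b, ∑ c, ∑ d, f a b c d = ∑ c, ∑ d, ∑ a, ∑ b, f a b c d := by
  simp only [Finset.sum_comm (γ := α) (α := γ), Finset.sum_comm (γ := β) (α := γ),
    Finset.sum_comm (γ := α) (α := δ), Finset.sum_comm (γ := β) (α := δ)]

section Coupling

variable [Fintype X] [Fintype Y] {p : X → ℝ} {q : Y → ℝ} {γ : X → Y → ℝ}

theorem IsPMF.le_one (hp : IsPMF p) (x : X) : p x ≤ 1 :=
  hp.2 ▸ Finset.single_le_sum (fun x _ => hp.1 x) (Finset.mem_univ x)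

theorem isCoupling_mul (hp : IsPMF p) (hq : IsPMF q) : IsCoupling p q fun x y => p x * q y :=
  ⟨fun x y => mul_nonneg (hp.1 x) (hq.1 y), fun x => by rw [← Finset.mul_sum, hq.2, mul_one],
    fun y => by rw [← Finset.sum_mul, hp.2, one_mul]⟩

namespace IsCoupling

theorem transpose (hγ : IsCoupling p q γ) : IsCoupling q p fun y x => γ x y :=
  ⟨fun y x => hγ.1 x y, hγ.2.2, hγ.2.1⟩

theorem le_left (hγ : IsCoupling p q γ) (x : X) (y : Y) : γ x y ≤ p x :=
  hγ.2.1 x ▸ Finset.single_le_sum (fun y _ => hγ.1 x y) (Finset.mem_univ y)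

theorem eq_zero_of_right_eq_zero (hγ : IsCoupling p q γ) {y : Y} (hy : q y = 0) (x : X) :
    γ x y = 0 :=
  le_antisymm (hy ▸ hγ.transpose.le_left y x) (hγ.1 x y)

theorem exists_pos_left (hγ : IsCoupling p q γ) {x : X} (hx : 0 < p x) : ∃ y, 0 < γ x y := by
  by_contra! h
  have : ∑ y, γ x y = 0 := Finset.sum_eq_zero fun y _ => le_antisymm (h y) (hγ.1 x y)
  exact hx.ne' (hγ.2.1 x ▸ this)

theorem exists_pos_right (hγ : IsCoupling p q γ) {y : Y} (hy : 0 < q y) : ∃ x, 0 < γ x y :=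
  hγ.transpose.exists_pos_left hy

theorem apply_eq_left_of_graph (hγ : IsCoupling p q γ) {f : X → Y}
    (hf : ∀ x y, y ≠ f x → γ x y = 0) (x : X) : γ x (f x) = p x := by
  rw [← hγ.2.1 x, Finset.sum_eq_single (f x) (fun y _ => hf x y) (by simp)]

theorem right_apply_eq_left_of_graph (hγ : IsCoupling p q γ) {f : X → Y}
    (hinj : Function.Injective f) (hf : ∀ x y, y ≠ f x → γ x y = 0) (x : X) : q (f x) = p x := by
  rw [← hγ.2.2 (f x), ← hγ.apply_eq_left_of_graph hf x,
    Finset.sum_eq_single x (fun x' _ hx' => hf x' _ (hinj.ne hx'.symm)) (by simp)]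

end IsCoupling

theorem isCompact_setOf_isCoupling (p : X → ℝ) (q : Y → ℝ) :
    IsCompact {γ : X → Y → ℝ | IsCoupling p q γ} := by
  have hclosed : IsClosed {γ : X → Y → ℝ | IsCoupling p q γ} := by
    simp only [IsCoupling, Set.ofPred_and, Set.ofPred_forall]
    refine (isClosed_iInter fun x => isClosed_iInter fun y => isClosed_le continuous_const ?_).inter
      ((isClosed_iInter fun x => isClosed_eq ?_ continuous_const).inter
        (isClosed_iInter fun y => isClosed_eq ?_ continuous_const)) <;> fun_prop
  refine (isCompact_univ_pi fun x => isCompact_univ_pi fun _ => isCompact_Icc (a := 0)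
    (b := p x)).of_isClosed_subset hclosed fun γ hγ => ?_
  simp only [Set.mem_univ_pi]
  exact fun x y => ⟨hγ.1 x y, hγ.le_left x y⟩

theorem exists_isCoupling_sum_mul_eq {ι : Type*} [Fintype ι] (hp : IsPMF p) (hq : IsPMF q)
    {t : ι → ℝ} (ht : 0 ≤ t) {c : ι → X → Y → ℝ} (hc : ∀ i, IsCoupling p q (c i)) :
    ∃ γ, IsCoupling p q γ ∧ ∀ x y, (∑ i, t i) * γ x y = ∑ i, t i * c i x y := by
  rcases (Finset.sum_nonneg fun i _ => ht i).eq_or_lt with h0 | hpos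
  · have ht0 : ∀ i, t i = 0 := congrFun ((Fintype.sum_eq_zero_iff_of_nonneg ht).1 h0.symm)
    exact ⟨_, isCoupling_mul hp hq, fun x y => by simp [ht0]⟩
  refine ⟨fun x y => (∑ i, t i * c i x y) / ∑ i, t i, ⟨fun x y => ?_, fun x => ?_, fun y => ?_⟩,
    fun x y => mul_div_cancel₀ _ hpos.ne'⟩
  · exact div_nonneg (Finset.sum_nonneg fun i _ => mul_nonneg (ht i) ((hc i).1 x y)) hpos.le
  · simp_rw [← Finset.sum_div, Finset.sum_comm (γ := Y), ← Finset.mul_sum, (hc _).2.1,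
      ← Finset.sum_mul, mul_div_cancel_left₀ _ hpos.ne']
  · simp_rw [← Finset.sum_div, Finset.sum_comm (γ := X), ← Finset.mul_sum, (hc _).2.2,
      ← Finset.sum_mul, mul_div_cancel_left₀ _ hpos.ne']

end Coupling

section Glue

variable [Fintype X] [Fintype Y] [Fintype W] {p : X → ℝ} {q : Y → ℝ} {r : W → ℝ}
  {a : X → Y → ℝ} {b : Y → W → ℝ}

-- Where `q y = 0` the junk value `x / 0 = 0` is harmless: then `a x y = b y w = 0`.
noncomputable def glue (a : X → Y → ℝ) (b : Y → W → ℝ) (q : Y → ℝ) : X → Y → W → ℝ :=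
  fun x y w => a x y * b y w / q y

theorem glue_nonneg (ha : IsCoupling p q a) (hb : IsCoupling q r b) : 0 ≤ glue a b q :=
  fun x y w => div_nonneg (mul_nonneg (ha.1 x y) (hb.1 y w)) ((hb.1 y w).trans (hb.le_left y w))

theorem sum_glue_right (ha : IsCoupling p q a) (hb : IsCoupling q r b) (x : X) (y : Y) :
    ∑ w, glue a b q x y w = a x y := by
  rcases eq_or_ne (q y) 0 with hy | hy
  · simp [glue, hy, ha.eq_zero_of_right_eq_zero hy]
  · simp_rw [glue, ← Finset.sum_div, ← Finset.mul_sum, hb.2.1, mul_div_cancel_right₀ _ hy]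

theorem sum_glue_left (ha : IsCoupling p q a) (hb : IsCoupling q r b) (y : Y) (w : W) :
    ∑ x, glue a b q x y w = b y w := by
  rcases eq_or_ne (q y) 0 with hy | hy
  · simp [glue, hy, hb.transpose.eq_zero_of_right_eq_zero hy]
  · simp_rw [glue, ← Finset.sum_div, ← Finset.sum_mul, ha.2.2, mul_div_cancel_left₀ _ hy]

theorem isCoupling_sum_glue (ha : IsCoupling p q a) (hb : IsCoupling q r b) :
    IsCoupling p r fun x w => ∑ y, glue a b q x y w := by
  refine ⟨fun x w => Finset.sum_nonneg fun y _ => glue_nonneg ha hb x y w, fun x => ?_,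
    fun w => ?_⟩
  · rw [Finset.sum_comm]; simp_rw [sum_glue_right ha hb, ha.2.1]
  · rw [Finset.sum_comm]; simp_rw [sum_glue_left ha hb, hb.2.2]

end Glue

section StepCoupling

variable [Fintype X] [Fintype Y] {mX : X → X → ℝ} {mY : Y → Y → ℝ} {μX : X → ℝ} {μY : Y → ℝ}

def pushCoupling (ν : X → Y → X → Y → ℝ) (γ : X → Y → ℝ) : X → Y → ℝ :=
  fun x' y' => ∑ x, ∑ y, ν x y x' y' * γ x y

theorem pushCoupling_pushCoupling (ν ν₁ : X → Y → X → Y → ℝ) (γ : X → Y → ℝ) :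
    pushCoupling (fun x y => pushCoupling ν (ν₁ x y)) γ =
      pushCoupling ν (pushCoupling ν₁ γ) := by
  funext x' y'
  simp only [pushCoupling, Finset.sum_mul, Finset.mul_sum, mul_assoc]
  exact sum_comm₄ _

theorem IsStepCoupling.nonneg :
    ∀ {k : ℕ} {ν : X → Y → X → Y → ℝ}, IsStepCoupling mX mY k ν → 0 ≤ ν
  | 1, _, hν => fun x y x' y' => (hν x y).1 x' y'
  | _ + 2, _, ⟨_, _, hνk, hν₁, rfl⟩ => fun x y _ _ =>
      Finset.sum_nonneg fun _ _ => Finset.sum_nonneg fun _ _ =>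
        mul_nonneg (hνk.nonneg _ _ _ _) ((hν₁ x y).1 _ _)

theorem IsStepCoupling.transpose :
    ∀ {k : ℕ} {ν : X → Y → X → Y → ℝ}, IsStepCoupling mX mY k ν →
      IsStepCoupling mY mX k fun y x y' x' => ν x y x' y'
  | 1, _, hν => fun y x => (hν x y).transpose
  | _ + 2, _, ⟨_, _, hνk, hν₁, rfl⟩ =>
      ⟨_, _, hνk.transpose, fun y x => (hν₁ x y).transpose, by
        funext y x y' x'; exact Finset.sum_comm⟩

theorem IsCoupling.isCoupling_pushCoupling {γ : X → Y → ℝ} {ν : X → Y → X → Y → ℝ}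
    (hμX : ∀ x', ∑ x, mX x x' * μX x = μX x') (hμY : ∀ y', ∑ y, mY y y' * μY y = μY y')
    (hγ : IsCoupling μX μY γ) (hν : ∀ x y, IsCoupling (mX x) (mY y) (ν x y)) :
    IsCoupling μX μY (pushCoupling ν γ) := by
  refine ⟨fun x' y' => Finset.sum_nonneg fun x _ => Finset.sum_nonneg fun y _ =>
    mul_nonneg ((hν x y).1 x' y') (hγ.1 x y), fun x' => ?_, fun y' => ?_⟩
  · simp only [pushCoupling]
    rw [← Finset.sum_comm_cycle]
    simp_rw [← Finset.sum_mul, (hν _ _).2.1, ← Finset.mul_sum, hγ.2.1, hμX]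
  · simp only [pushCoupling]
    rw [← Finset.sum_comm_cycle, Finset.sum_comm]
    simp_rw [← Finset.sum_mul, (hν _ _).2.2, ← Finset.mul_sum, hγ.2.2, hμY]

theorem IsStepCoupling.isCoupling_pushCoupling
    (hμX : ∀ x', ∑ x, mX x x' * μX x = μX x') (hμY : ∀ y', ∑ y, mY y y' * μY y = μY y') :
    ∀ {k : ℕ} {ν : X → Y → X → Y → ℝ} {γ : X → Y → ℝ}, IsStepCoupling mX mY k ν →
      IsCoupling μX μY γ → IsCoupling μX μY (pushCoupling ν γ)
  | 1, _, _, hν, hγ => hγ.isCoupling_pushCoupling hμX hμY hν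
  | _ + 2, _, _, ⟨_, _, hνk, hν₁, rfl⟩, hγ => by
      have := hνk.isCoupling_pushCoupling hμX hμY (hγ.isCoupling_pushCoupling hμX hμY hν₁)
      rwa [← pushCoupling_pushCoupling] at this

def stepPower (ν₁ : X → Y → X → Y → ℝ) : ℕ → X → Y → X → Y → ℝ
  | 0 => ν₁
  | k + 1 => fun x y => pushCoupling (stepPower ν₁ k) (ν₁ x y)

theorem isStepCoupling_stepPower {ν₁ : X → Y → X → Y → ℝ}
    (hν₁ : ∀ x y, IsCoupling (mX x) (mY y) (ν₁ x y)) :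
    ∀ k, IsStepCoupling mX mY (k + 1) (stepPower ν₁ k)
  | 0 => hν₁
  | k + 1 => ⟨_, _, isStepCoupling_stepPower hν₁ k, hν₁, rfl⟩

theorem pushCoupling_stepPower {ν₁ : X → Y → X → Y → ℝ} {γ : X → Y → ℝ}
    (h : pushCoupling ν₁ γ = γ) : ∀ k, pushCoupling (stepPower ν₁ k) γ = γ
  | 0 => h
  | k + 1 => by
      rw [stepPower, pushCoupling_pushCoupling, h, pushCoupling_stepPower h k]

end StepCoupling

section Distortion

variable [Fintype X] [Fintype Y] {dX : X → X → ℝ} {dY : Y → Y → ℝ}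

def biDistortion (dX : X → X → ℝ) (dY : Y → Y → ℝ) (γ η : X → Y → ℝ) : ℝ :=
  ∑ x, ∑ y, ∑ x', ∑ y', |dX x x' - dY y y'| * η x' y' * γ x y

theorem disk_eq_biDistortion (dX : X → X → ℝ) (dY : Y → Y → ℝ) (γ : X → Y → ℝ)
    (ν : X → Y → X → Y → ℝ) : disk dX dY γ ν = biDistortion dX dY γ (pushCoupling ν γ) := by
  simp only [disk, biDistortion, pushCoupling, Finset.mul_sum, Finset.sum_mul, mul_assoc]
  exact Finset.sum_congr rfl fun x _ => Finset.sum_congr rfl fun y _ => sum_comm₄ _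

theorem disk_transpose (dX : X → X → ℝ) (dY : Y → Y → ℝ) (γ : X → Y → ℝ)
    (ν : X → Y → X → Y → ℝ) :
    disk dY dX (fun y x => γ x y) (fun y x y' x' => ν x y x' y') = disk dX dY γ ν := by
  simp only [disk, abs_sub_comm (dY _ _), Finset.sum_comm (γ := Y) (α := X)]

theorem disk_nonneg {γ : X → Y → ℝ} {ν : X → Y → X → Y → ℝ} (hγ : 0 ≤ γ) (hν : 0 ≤ ν) :
    0 ≤ disk dX dY γ ν := by
  iterate 6 refine Finset.sum_nonneg fun _ _ => ?_
  exact mul_nonneg (mul_nonneg (mul_nonneg (abs_nonneg _) (hν ..)) (hγ ..)) (hγ ..)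

theorem eq_of_biDistortion_eq_zero {γ η : X → Y → ℝ} (hγ : 0 ≤ γ) (hη : 0 ≤ η)
    (h : biDistortion dX dY γ η = 0) {x x' : X} {y y' : Y} (hxy : 0 < γ x y)
    (hxy' : 0 < η x' y') : dX x x' = dY y y' := by
  have hnn : ∀ x y x' y', 0 ≤ |dX x x' - dY y y'| * η x' y' * γ x y := fun x y x' y' =>
    mul_nonneg (mul_nonneg (abs_nonneg _) (hη x' y')) (hγ x y)
  rw [biDistortion] at h
  have hsum : ∑ p : X × Y × X × Y,
      |dX p.1 p.2.2.1 - dY p.2.1 p.2.2.2| * η p.2.2.1 p.2.2.2 * γ p.1 p.2.1 = 0 := by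
    simpa only [Fintype.sum_prod_type] using h
  have hterm :=
    congrFun ((Fintype.sum_eq_zero_iff_of_nonneg fun p => hnn ..).1 hsum) (x, y, x', y')
  simpa [hxy.ne', hxy'.ne', sub_eq_zero] using hterm

theorem biDistortion_le_sum_abs {μX : X → ℝ} {μY : Y → ℝ} (hμX : IsPMF μX)
    {γ η : X → Y → ℝ} (hγ : IsCoupling μX μY γ) (hη : IsCoupling μX μY η) :
    biDistortion dX dY γ η ≤ ∑ x, ∑ y, ∑ x', ∑ y', |dX x x' - dY y y'| := by
  unfold biDistortion
  gcongr with x _ y _ x' _ y' _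
  calc |dX x x' - dY y y'| * η x' y' * γ x y ≤ |dX x x' - dY y y'| * 1 * 1 := by
        gcongr
        · exact hγ.1 x y
        · exact (hη.le_left x' y').trans (hμX.le_one x')
        · exact (hγ.le_left x y).trans (hμX.le_one x)
    _ = |dX x x' - dY y y'| := by ring

end Distortion

section Graph

variable [Fintype X] [Fintype Y] [DecidableEq Y] {p : X → ℝ} {q : Y → ℝ}

def graphCoupling (ψ : X → Y) (p : X → ℝ) : X → Y → ℝ :=
  fun x y => if y = ψ x then p x else 0

theorem isCoupling_graphCoupling (ψ : X ≃ Y) (hp : ∀ x, 0 ≤ p x) (hq : ∀ x, q (ψ x) = p x) :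
    IsCoupling p q (graphCoupling ψ p) := by
  refine ⟨fun x y => ?_, fun x => by simp [graphCoupling], fun y => ?_⟩
  · unfold graphCoupling; split_ifs <;> simp [hp]
  · unfold graphCoupling
    rw [Fintype.sum_eq_single (ψ.symm y) fun x hx => if_neg (by rintro rfl; simp at hx)]
    simp [← hq]

theorem biDistortion_graphCoupling {dX : X → X → ℝ} {dY : Y → Y → ℝ} {ψ : X → Y}
    (hψ : ∀ x x', dY (ψ x) (ψ x') = dX x x') (p p' : X → ℝ) :
    biDistortion dX dY (graphCoupling ψ p) (graphCoupling ψ p') = 0 := by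
  simp [biDistortion, graphCoupling, hψ]

end Graph

section Gluing

variable [Fintype X] [Fintype Y] [Fintype W] {mX : X → X → ℝ} {mY : Y → Y → ℝ}
  {mW : W → W → ℝ}

def marginal₁₂ (Γ : X → Y → W → ℝ) : X → Y → ℝ := fun x y => ∑ w, Γ x y w

def marginal₂₃ (Γ : X → Y → W → ℝ) : Y → W → ℝ := fun y w => ∑ x, Γ x y w

def marginal₁₃ (Γ : X → Y → W → ℝ) : X → W → ℝ := fun x w => ∑ y, Γ x y w

theorem exists_oneStep_glue (hmX : ∀ x, IsPMF (mX x)) (hmW : ∀ w, IsPMF (mW w))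
    {a : X → Y → X → Y → ℝ} {b : Y → W → Y → W → ℝ}
    (ha : ∀ x y, IsCoupling (mX x) (mY y) (a x y)) (hb : ∀ y w, IsCoupling (mY y) (mW w) (b y w))
    {Γ : X → Y → W → ℝ} (hΓ : 0 ≤ Γ) :
    ∃ (c : X → W → X → W → ℝ) (H : X → Y → W → ℝ),
      (∀ x w, IsCoupling (mX x) (mW w) (c x w)) ∧ 0 ≤ H ∧
      marginal₁₂ H = pushCoupling a (marginal₁₂ Γ) ∧
      marginal₂₃ H = pushCoupling b (marginal₂₃ Γ) ∧
      marginal₁₃ H = pushCoupling c (marginal₁₃ Γ) := by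
  choose c hc hcΓ using fun x w => exists_isCoupling_sum_mul_eq (hmX x) (hmW w) (hΓ x · w)
    fun y => isCoupling_sum_glue (ha x y) (hb y w)
  let H : X → Y → W → ℝ := fun x' y' w' =>
    ∑ t : X × Y × W, glue (a t.1 t.2.1) (b t.2.1 t.2.2) (mY t.2.1) x' y' w' * Γ t.1 t.2.1 t.2.2
  refine ⟨c, H, hc, fun x' y' w' => ?_, ?_, ?_, ?_⟩
  · exact Finset.sum_nonneg fun t _ =>
      mul_nonneg (glue_nonneg (ha _ _) (hb _ _) x' y' w') (hΓ _ _ _)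
  · funext x' y'
    simp only [marginal₁₂, pushCoupling, H]
    rw [Finset.sum_comm]
    simp_rw [← Finset.sum_mul, sum_glue_right (ha _ _) (hb _ _), Fintype.sum_prod_type,
      Finset.mul_sum]
  · funext y' w'
    simp only [marginal₂₃, pushCoupling, H]
    rw [Finset.sum_comm]
    simp_rw [← Finset.sum_mul, sum_glue_left (ha _ _) (hb _ _), Fintype.sum_prod_type,
      Finset.mul_sum]
    simp only [Finset.sum_comm (γ := Y) (α := X), Finset.sum_comm (γ := W) (α := X)]
  · funext x' w'
    simp only [marginal₁₃, pushCoupling, H]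
    rw [Finset.sum_comm]
    simp_rw [← Finset.sum_mul, Fintype.sum_prod_type, mul_comm (c _ _ _ _), hcΓ,
      mul_comm (Γ _ _ _)]
    exact Finset.sum_congr rfl fun x _ => Finset.sum_comm

theorem IsStepCoupling.exists_glue (hmX : ∀ x, IsPMF (mX x)) (hmW : ∀ w, IsPMF (mW w)) :
    ∀ (k : ℕ) {ν₁ : X → Y → X → Y → ℝ} {ν₂ : Y → W → Y → W → ℝ} {Γ : X → Y → W → ℝ},
      IsStepCoupling mX mY (k + 1) ν₁ → IsStepCoupling mY mW (k + 1) ν₂ → 0 ≤ Γ →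
      ∃ (ν : X → W → X → W → ℝ) (H : X → Y → W → ℝ),
        IsStepCoupling mX mW (k + 1) ν ∧ 0 ≤ H ∧
        marginal₁₂ H = pushCoupling ν₁ (marginal₁₂ Γ) ∧
        marginal₂₃ H = pushCoupling ν₂ (marginal₂₃ Γ) ∧
        marginal₁₃ H = pushCoupling ν (marginal₁₃ Γ)
  | 0, _, _, _, hν₁, hν₂, hΓ => exists_oneStep_glue hmX hmW hν₁ hν₂ hΓ
  | k + 1, _, _, _, ⟨_, _, hν₁k, ha, rfl⟩, ⟨_, _, hν₂k, hb, rfl⟩, hΓ => by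
      obtain ⟨c, H₀, hc, hH₀, h₁₂, h₂₃, h₁₃⟩ := exists_oneStep_glue hmX hmW ha hb hΓ
      obtain ⟨ν, H, hν, hH, h₁₂', h₂₃', h₁₃'⟩ := exists_glue hmX hmW k hν₁k hν₂k hH₀
      refine ⟨_, H, ⟨ν, c, hν, hc, rfl⟩, hH, ?_, ?_, ?_⟩
      · rw [h₁₂', h₁₂]; exact (pushCoupling_pushCoupling _ _ _).symm
      · rw [h₂₃', h₂₃]; exact (pushCoupling_pushCoupling _ _ _).symm
      · rw [h₁₃', h₁₃]; exact (pushCoupling_pushCoupling _ _ _).symm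

variable {μX : X → ℝ} {μY : Y → ℝ} {μW : W → ℝ} {dX : X → X → ℝ} {dY : Y → Y → ℝ}
  {dW : W → W → ℝ}

theorem exists_disk_le_add (hmX : ∀ x, IsPMF (mX x)) (hmW : ∀ w, IsPMF (mW w)) {k : ℕ}
    {γ₁ : X → Y → ℝ} {ν₁ : X → Y → X → Y → ℝ} {γ₂ : Y → W → ℝ} {ν₂ : Y → W → Y → W → ℝ}
    (hγ₁ : IsCoupling μX μY γ₁) (hν₁ : IsStepCoupling mX mY (k + 1) ν₁)
    (hγ₂ : IsCoupling μY μW γ₂) (hν₂ : IsStepCoupling mY mW (k + 1) ν₂) :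
    ∃ γ ν, IsCoupling μX μW γ ∧ IsStepCoupling mX mW (k + 1) ν ∧
      disk dX dW γ ν ≤ disk dX dY γ₁ ν₁ + disk dY dW γ₂ ν₂ := by
  set Γ := glue γ₁ γ₂ μY
  have hΓ₁₂ : marginal₁₂ Γ = γ₁ := funext₂ (sum_glue_right hγ₁ hγ₂)
  have hΓ₂₃ : marginal₂₃ Γ = γ₂ := funext₂ (sum_glue_left hγ₁ hγ₂)
  obtain ⟨ν, H, hν, hH, hH₁₂, hH₂₃, hH₁₃⟩ :=
    IsStepCoupling.exists_glue hmX hmW k hν₁ hν₂ (glue_nonneg hγ₁ hγ₂)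
  refine ⟨marginal₁₃ Γ, ν, isCoupling_sum_glue hγ₁ hγ₂, hν, ?_⟩
  have hΓ := glue_nonneg hγ₁ hγ₂
  rw [disk_eq_biDistortion, disk_eq_biDistortion, disk_eq_biDistortion, ← hH₁₃, ← hΓ₁₂, ← hH₁₂,
    ← hΓ₂₃, ← hH₂₃]
  calc biDistortion dX dW (marginal₁₃ Γ) (marginal₁₃ H)
      = ∑ x, ∑ y, ∑ w, ∑ x', ∑ y', ∑ w', |dX x x' - dW w w'| * H x' y' w' * Γ x y w := by
        simp only [biDistortion, marginal₁₃, Finset.mul_sum, Finset.sum_mul]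
        simp only [Finset.sum_comm (γ := Y) (α := X), Finset.sum_comm (γ := W) (α := X),
          Finset.sum_comm (γ := W) (α := Y)]
    _ ≤ ∑ x, ∑ y, ∑ w, ∑ x', ∑ y', ∑ w', (|dX x x' - dY y y'| * H x' y' w' * Γ x y w +
          |dY y y' - dW w w'| * H x' y' w' * Γ x y w) := by
        gcongr with x _ y _ w _ x' _ y' _ w' _
        rw [← add_mul, ← add_mul]
        exact mul_le_mul_of_nonneg_right
          (mul_le_mul_of_nonneg_right (abs_sub_le _ _ _) (hH x' y' w')) (hΓ x y w)
    _ = biDistortion dX dY (marginal₁₂ Γ) (marginal₁₂ H) +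
          biDistortion dY dW (marginal₂₃ Γ) (marginal₂₃ H) := by
        simp only [biDistortion, marginal₁₂, marginal₂₃, Finset.mul_sum, Finset.sum_mul,
          Finset.sum_add_distrib]
        simp only [Finset.sum_comm (γ := Y) (α := X), Finset.sum_comm (γ := W) (α := X),
          Finset.sum_comm (γ := W) (α := Y)]

end Gluing

section Rigidity

variable [Fintype X] [Fintype Y] {dX : X → X → ℝ} {dY : Y → Y → ℝ} {μX : X → ℝ} {μY : Y → ℝ}

theorem IsMetricOn.eq_zero_iff (hd : IsMetricOn dX) {x x' : X} : dX x x' = 0 ↔ x = x' :=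
  ⟨fun h => by_contra fun hne => (hd.2.2.1 x x' hne).ne' h, fun h => h ▸ hd.1 x⟩

theorem exists_equiv_of_biDistortion_eq_zero (hdX : ∀ x x', dX x x' = 0 ↔ x = x')
    (hdY : ∀ y y', dY y y' = 0 ↔ y = y') (hμX : ∀ x, 0 < μX x) (hμY : ∀ y, 0 < μY y)
    {γ η : X → Y → ℝ} (hγ : IsCoupling μX μY γ) (hη : IsCoupling μX μY η)
    (h : biDistortion dX dY γ η = 0) :
    ∃ ψ : X ≃ Y, (∀ x x', dY (ψ x) (ψ x') = dX x x') ∧ (∀ x y, y ≠ ψ x → γ x y = 0) ∧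
      (∀ x y, y ≠ ψ x → η x y = 0) := by
  -- Taking `x = x'` below forces the supports of `γ` and `η` onto one graph.
  have hsupp : ∀ {x x' y y'}, 0 < γ x y → 0 < η x' y' → dX x x' = dY y y' :=
    eq_of_biDistortion_eq_zero hγ.1 hη.1 h
  choose f hf using fun x => hγ.exists_pos_left (hμX x)
  have hη_graph : ∀ {x y}, 0 < η x y → y = f x := fun hxy =>
    ((hdY _ _).1 ((hsupp (hf _) hxy).symm.trans ((hdX _ _).2 rfl))).symm
  have hγ_graph : ∀ {x y}, 0 < γ x y → y = f x := fun hxy => by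
    obtain ⟨y', hy'⟩ := hη.exists_pos_left (hμX _)
    rw [hη_graph hy'] at hy'
    exact (hdY _ _).1 ((hsupp hxy hy').symm.trans ((hdX _ _).2 rfl))
  have hηf : ∀ x, 0 < η x (f x) := fun x => by
    obtain ⟨y, hy⟩ := hη.exists_pos_left (hμX x)
    rwa [hη_graph hy] at hy
  have hiso : ∀ x x', dY (f x) (f x') = dX x x' := fun x x' => (hsupp (hf x) (hηf x')).symm
  have hinj : Function.Injective f := fun x x' hxx' =>
    (hdX _ _).1 ((hiso x x').symm.trans ((hdY _ _).2 hxx'))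
  have hsurj : Function.Surjective f := fun y => by
    obtain ⟨x, hx⟩ := hγ.exists_pos_right (hμY y)
    exact ⟨x, (hγ_graph hx).symm⟩
  exact ⟨.ofBijective f ⟨hinj, hsurj⟩, hiso,
    fun x y hy => le_antisymm (not_lt.1 fun hpos => hy (hγ_graph hpos)) (hγ.1 x y),
    fun x y hy => le_antisymm (not_lt.1 fun hpos => hy (hη_graph hpos)) (hη.1 x y)⟩

end Rigidity

section Distance

variable [Fintype X] [Fintype Y] [Fintype W] {mX : X → X → ℝ} {mY : Y → Y → ℝ}
  {mW : W → W → ℝ} {μX : X → ℝ} {μY : Y → ℝ} {μW : W → ℝ}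
  {dX : X → X → ℝ} {dY : Y → Y → ℝ} {dW : W → W → ℝ}

def distortions (mX dX : X → X → ℝ) (μX : X → ℝ) (mY dY : Y → Y → ℝ) (μY : Y → ℝ) (k : ℕ) :
    Set ℝ :=
  {r | ∃ (γ : X → Y → ℝ) (ν : X → Y → X → Y → ℝ),
    IsCoupling μX μY γ ∧ IsStepCoupling mX mY k ν ∧ r = disk dX dY γ ν}

theorem dGWk_eq_sInf (k : ℕ) :
    dGWk mX dX μX mY dY μY k = sInf (distortions mX dX μX mY dY μY k) :=
  rfl

theorem bddBelow_distortions (k : ℕ) : BddBelow (distortions mX dX μX mY dY μY k) :=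
  ⟨0, fun _ ⟨_, _, hγ, hν, hr⟩ => hr ▸ disk_nonneg hγ.1 hν.nonneg⟩

theorem distortions_nonempty (hX : IsMMC mX μX) (hY : IsMMC mY μY) (k : ℕ) :
    (distortions mX dX μX mY dY μY (k + 1)).Nonempty :=
  ⟨_, _, _, isCoupling_mul hX.2.1 hY.2.1,
    isStepCoupling_stepPower (fun x y => isCoupling_mul (hX.1 x) (hY.1 y)) k, rfl⟩

theorem dGWk_nonneg (k : ℕ) : 0 ≤ dGWk mX dX μX mY dY μY k :=
  Real.sInf_nonneg fun _ ⟨_, _, hγ, hν, hr⟩ => hr ▸ disk_nonneg hγ.1 hν.nonneg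

theorem dGWk_comm (k : ℕ) : dGWk mY dY μY mX dX μX k = dGWk mX dX μX mY dY μY k := by
  simp only [dGWk_eq_sInf]
  congr 1
  ext r
  constructor <;> rintro ⟨γ, ν, hγ, hν, rfl⟩ <;>
    exact ⟨_, _, hγ.transpose, hν.transpose, (disk_transpose _ _ _ _).symm⟩

open scoped Pointwise in
theorem dGWk_triangle (hX : IsMMC mX μX) (hY : IsMMC mY μY) (hW : IsMMC mW μW) (k : ℕ) :
    dGWk mX dX μX mW dW μW (k + 1) ≤
      dGWk mX dX μX mY dY μY (k + 1) + dGWk mY dY μY mW dW μW (k + 1) := by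
  simp only [dGWk_eq_sInf]
  rw [← csInf_add (distortions_nonempty hX hY k) (bddBelow_distortions _)
    (distortions_nonempty hY hW k) (bddBelow_distortions _)]
  refine le_csInf ((distortions_nonempty hX hY k).add (distortions_nonempty hY hW k)) ?_
  rintro _ ⟨_, ⟨γ₁, ν₁, hγ₁, hν₁, rfl⟩, _, ⟨γ₂, ν₂, hγ₂, hν₂, rfl⟩, rfl⟩
  obtain ⟨γ, ν, hγ, hν, hle⟩ := exists_disk_le_add hX.1 hW.1 hγ₁ hν₁ hγ₂ hν₂
  exact csInf_le_of_le (bddBelow_distortions _) ⟨γ, ν, hγ, hν, rfl⟩ hle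

theorem dGWk_le_sum_abs (hX : IsMMC mX μX) (hY : IsMMC mY μY) (k : ℕ) :
    dGWk mX dX μX mY dY μY (k + 1) ≤ ∑ x, ∑ y, ∑ x', ∑ y', |dX x x' - dY y y'| := by
  obtain ⟨_, γ, ν, hγ, hν, rfl⟩ := distortions_nonempty (dX := dX) (dY := dY) hX hY k
  refine csInf_le_of_le (bddBelow_distortions _) ⟨γ, ν, hγ, hν, rfl⟩ ?_
  rw [disk_eq_biDistortion]
  exact biDistortion_le_sum_abs hX.2.1 hγ (hν.isCoupling_pushCoupling hX.2.2.2 hY.2.2.2 hγ)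

theorem exists_disk_eq_dGWk_one (hmX : ∀ x, IsPMF (mX x)) (hmY : ∀ y, IsPMF (mY y))
    (hμX : IsPMF μX) (hμY : IsPMF μY) :
    ∃ γ ν, IsCoupling μX μY γ ∧ IsStepCoupling mX mY 1 ν ∧
      disk dX dY γ ν = dGWk mX dX μX mY dY μY 1 := by
  let S := {γ : X → Y → ℝ | IsCoupling μX μY γ} ×ˢ
    Set.univ.pi fun x => Set.univ.pi fun y => {c | IsCoupling (mX x) (mY y) c}
  have hS : IsCompact S := (isCompact_setOf_isCoupling _ _).prod
    (isCompact_univ_pi fun _ => isCompact_univ_pi fun _ => isCompact_setOf_isCoupling _ _)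
  have hmem : ∀ {γ ν}, (γ, ν) ∈ S ↔ IsCoupling μX μY γ ∧ IsStepCoupling mX mY 1 ν := by
    simp [S, IsStepCoupling]
  have hne : S.Nonempty := ⟨(_, fun x y x' y' => mX x x' * mY y y'),
    hmem.2 ⟨isCoupling_mul hμX hμY, fun x y => isCoupling_mul (hmX x) (hmY y)⟩⟩
  obtain ⟨⟨γ, ν⟩, hγν, hmin⟩ := hS.exists_isMinOn hne
    (by unfold disk; fun_prop : Continuous fun p : _ × _ => disk dX dY p.1 p.2).continuousOn
  obtain ⟨hγ, hν⟩ := hmem.1 hγν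
  refine ⟨γ, ν, hγ, hν, le_antisymm ?_ ?_⟩
  · rw [dGWk_eq_sInf]
    refine le_csInf ⟨_, γ, ν, hγ, hν, rfl⟩ ?_
    rintro _ ⟨γ', ν', hγ', hν', rfl⟩
    simpa only using isMinOn_iff.1 hmin _ (hmem.2 ⟨hγ', hν'⟩)
  · exact csInf_le (bddBelow_distortions _) ⟨γ, ν, hγ, hν, rfl⟩

theorem dGWMCMS_nonneg : 0 ≤ dGWMCMS mX dX μX mY dY μY :=
  Real.iSup_nonneg fun _ => dGWk_nonneg _

theorem dGWMCMS_comm : dGWMCMS mX dX μX mY dY μY = dGWMCMS mY dY μY mX dX μX :=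
  congrArg iSup (funext fun k => (dGWk_comm (k + 1)).symm)

theorem dGWk_le_dGWMCMS (hX : IsMMC mX μX) (hY : IsMMC mY μY) (k : ℕ) :
    dGWk mX dX μX mY dY μY (k + 1) ≤ dGWMCMS mX dX μX mY dY μY :=
  le_ciSup ⟨_, Set.forall_mem_range.2 (dGWk_le_sum_abs hX hY)⟩ k

theorem dGWMCMS_triangle (hX : IsMMC mX μX) (hY : IsMMC mY μY) (hW : IsMMC mW μW) :
    dGWMCMS mX dX μX mW dW μW ≤ dGWMCMS mX dX μX mY dY μY + dGWMCMS mY dY μY mW dW μW :=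
  ciSup_le fun k => (dGWk_triangle hX hY hW k).trans
    (add_le_add (dGWk_le_dGWMCMS hX hY k) (dGWk_le_dGWMCMS hY hW k))

theorem dGWMCMS_eq_zero_of_mcmsIso (hX : IsMMC mX μX) (hY : IsMMC mY μY)
    (h : MCMSIso mX dX μX mY dY μY) : dGWMCMS mX dX μX mY dY μY = 0 := by
  classical
  obtain ⟨ψ, hψd, hψm, hψμ⟩ := h
  let γ := graphCoupling ψ μX
  let ν₁ : X → Y → X → Y → ℝ := fun x y =>
    if y = ψ x then graphCoupling ψ (mX x) else fun x' y' => mX x x' * mY y y'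
  have hν₁ : ∀ x y, IsCoupling (mX x) (mY y) (ν₁ x y) := fun x y => by
    by_cases hy : y = ψ x
    · subst hy
      simpa [ν₁] using isCoupling_graphCoupling ψ (hX.1 x).1 (hψm x)
    · simpa [ν₁, hy] using isCoupling_mul (hX.1 x) (hY.1 y)
  have hγ : pushCoupling ν₁ γ = γ := by
    funext x' y'
    simp [pushCoupling, γ, ν₁, graphCoupling, hX.2.2.2]
  have hk : ∀ k, dGWk mX dX μX mY dY μY (k + 1) = 0 := fun k =>
    le_antisymm (csInf_le (bddBelow_distortions _) ⟨γ, stepPower ν₁ k,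
      isCoupling_graphCoupling ψ hX.2.1.1 hψμ, isStepCoupling_stepPower hν₁ k, by
        rw [disk_eq_biDistortion, pushCoupling_stepPower hγ, biDistortion_graphCoupling hψd]⟩)
      (dGWk_nonneg _)
  simp [dGWMCMS, hk]

theorem mcmsIso_of_disk_eq_zero (hX : IsMMC mX μX) (hY : IsMMC mY μY) (hdX : IsMetricOn dX)
    (hdY : IsMetricOn dY) {γ : X → Y → ℝ} {ν : X → Y → X → Y → ℝ} (hγ : IsCoupling μX μY γ)
    (hν : IsStepCoupling mX mY 1 ν) (h : disk dX dY γ ν = 0) : MCMSIso mX dX μX mY dY μY := by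
  rw [disk_eq_biDistortion] at h
  obtain ⟨ψ, hψd, hγψ, hηψ⟩ := exists_equiv_of_biDistortion_eq_zero (fun _ _ => hdX.eq_zero_iff)
    (fun _ _ => hdY.eq_zero_iff) hX.2.2.1 hY.2.2.1 hγ
    (hν.isCoupling_pushCoupling hX.2.2.2 hY.2.2.2 hγ) h
  refine ⟨ψ, hψd, fun x => (hν x (ψ x)).right_apply_eq_left_of_graph ψ.injective
    fun x' y' hy' => ?_, hγ.right_apply_eq_left_of_graph ψ.injective hγψ⟩
  have hle : ν x (ψ x) x' y' * γ x (ψ x) ≤ pushCoupling ν γ x' y' :=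
    (Finset.single_le_sum (fun y _ => mul_nonneg (hν.nonneg x y x' y') (hγ.1 x y))
      (Finset.mem_univ (ψ x))).trans
    (Finset.single_le_sum (fun x _ => Finset.sum_nonneg fun y _ =>
      mul_nonneg (hν.nonneg x y x' y') (hγ.1 x y)) (Finset.mem_univ x))
  rw [hηψ x' y' hy', hγ.apply_eq_left_of_graph hγψ] at hle
  exact le_antisymm (nonpos_of_mul_nonpos_left hle (hX.2.2.1 x)) (hν.nonneg x (ψ x) x' y')

theorem mcmsIso_of_dGWMCMS_eq_zero (hX : IsMMC mX μX) (hY : IsMMC mY μY) (hdX : IsMetricOn dX)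
    (hdY : IsMetricOn dY) (h : dGWMCMS mX dX μX mY dY μY = 0) : MCMSIso mX dX μX mY dY μY := by
  obtain ⟨γ, ν, hγ, hν, hdisk⟩ :=
    exists_disk_eq_dGWk_one (dX := dX) (dY := dY) hX.1 hY.1 hX.2.1 hY.2.1
  refine mcmsIso_of_disk_eq_zero hX hY hdX hdY hγ hν (hdisk.trans (le_antisymm ?_ (dGWk_nonneg 1)))
  exact h ▸ dGWk_le_dGWMCMS hX hY 0

end Distance

theorem dGWMCMS_metric_general {X Y W : Type*} [Fintype X] [Fintype Y] [Fintype W]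
    (mX : X → X → ℝ) (dX : X → X → ℝ) (μX : X → ℝ)
    (mY : Y → Y → ℝ) (dY : Y → Y → ℝ) (μY : Y → ℝ)
    (mW : W → W → ℝ) (dW : W → W → ℝ) (μW : W → ℝ)
    (hX : IsMMC mX μX) (hY : IsMMC mY μY) (hW : IsMMC mW μW)
    (hdX : IsMetricOn dX) (hdY : IsMetricOn dY) :
    0 ≤ dGWMCMS mX dX μX mY dY μY ∧
    dGWMCMS mX dX μX mY dY μY = dGWMCMS mY dY μY mX dX μX ∧
    dGWMCMS mX dX μX mW dW μW ≤ dGWMCMS mX dX μX mY dY μY + dGWMCMS mY dY μY mW dW μW ∧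
    (dGWMCMS mX dX μX mY dY μY = 0 ↔ MCMSIso mX dX μX mY dY μY) :=
  ⟨dGWMCMS_nonneg, dGWMCMS_comm, dGWMCMS_triangle hX hY hW,
    mcmsIso_of_dGWMCMS_eq_zero hX hY hdX hdY, dGWMCMS_eq_zero_of_mcmsIso hX hY⟩

theorem dGWMCMS_metric {X Y W : Type*} [Fintype X] [Fintype Y] [Fintype W]
    (mX : X → X → ℝ) (dX : X → X → ℝ) (μX : X → ℝ)
    (mY : Y → Y → ℝ) (dY : Y → Y → ℝ) (μY : Y → ℝ)
    (mW : W → W → ℝ) (dW : W → W → ℝ) (μW : W → ℝ)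
    (hX : IsMMC mX μX) (hY : IsMMC mY μY) (hW : IsMMC mW μW)
    (hdX : IsMetricOn dX) (hdY : IsMetricOn dY) (hdW : IsMetricOn dW) :
    0 ≤ dGWMCMS mX dX μX mY dY μY ∧
    dGWMCMS mX dX μX mY dY μY = dGWMCMS mY dY μY mX dX μX ∧
    dGWMCMS mX dX μX mW dW μW ≤ dGWMCMS mX dX μX mY dY μY + dGWMCMS mY dY μY mW dW μW ∧
    (dGWMCMS mX dX μX mY dY μY = 0 ↔ MCMSIso mX dX μX mY dY μY) :=
  dGWMCMS_metric_general mX dX μX mY dY μY mW dW μW hX hY hW hdX hdY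

end WLGW
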